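/- Suppose Z = p(W) for some W ∈ O. Then Z = − Σ_{∅ ≠ A ⊆ N} ((−1)^{|A|} / d_A) · (Tr_A Z) ⊗ 1_A, where d_A = Π_{i ∈ A} d_i and (Tr_A Z) ⊗ 1_A denotes the operator on H acting as Tr_A Z on the tensor factors indexed by N∖A and as the identity on the factors indexed by A (for A = N this term is (Tr Z / D) · 1_H). -/
import Mathlib


open Matrix BigOperators
open scoped ComplexOrder

namespace Compat

noncomputable section

variable {n : ℕ} (d : Fin n → ℕ)

/-- The index type of the full tensor product `H = H_1 ⊗ ⋯ ⊗ H_n`,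
where `H_i = ℂ^{d i}`; operators on `H` are matrices indexed by `Idx d`. -/
abbrev Idx : Type := ∀ i, Fin (d i)

/-- The index type of the tensor product of the factors `H_i` with `i ∈ A`. -/
abbrev SubIdx (A : Finset (Fin n)) : Type := ∀ i : A, Fin (d i.1)

/-- Combine an assignment on `B` and one on `Bᶜ` into a full assignment. -/
def glue (B : Finset (Fin n)) (x : SubIdx d B) (z : SubIdx d Bᶜ) : Idx d :=
  fun i => if h : i ∈ B then x ⟨i, h⟩ else z ⟨i, Finset.mem_compl.mpr h⟩

/-- Partial trace keeping the factors in `B` (i.e. tracing out the factors in `Bᶜ`). -/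
def reduce (B : Finset (Fin n)) (M : Matrix (Idx d) (Idx d) ℂ) :
    Matrix (SubIdx d B) (SubIdx d B) ℂ :=
  fun x y => ∑ z : SubIdx d Bᶜ, M (glue d B x z) (glue d B y z)

/-- Place an operator acting on the factors in `B`, tensored with the identity
on the remaining factors, as an operator on the full space `H`. -/
def embed (B : Finset (Fin n)) (W : Matrix (SubIdx d B) (SubIdx d B) ℂ) :
    Matrix (Idx d) (Idx d) ℂ :=
  fun x y =>
    if ∀ i ∈ Bᶜ, x i = y i then W (fun i => x i.1) (fun i => y i.1) else 0

/-- Index type for `H^(i) = ⊗_{j ≠ i} H_j`. -/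
abbrev RedIdx (i : Fin n) := SubIdx d ({i}ᶜ)

/-- The space `O` of `n`-tuples of operators, the `i`-th acting on `H^(i)`. -/
abbrev Tuple := ∀ i : Fin n, Matrix (RedIdx d i) (RedIdx d i) ℂ

/-- Membership in (the Hermitian tuples space) `O`: every component is Hermitian. -/
def IsHermTuple (W : Tuple d) : Prop := ∀ i, (W i).IsHermitian

/-- A density state: positive semidefinite with trace one. -/
def IsDensity {m : Type*} [Fintype m] (M : Matrix m m ℂ) : Prop :=
  M.PosSemidef ∧ M.trace = 1

/-- The set `C`: a tuple `σ` lies in `C` iff there is a density state `ρ` on the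
full space whose one-system partial traces are the `σ i`. -/
def MemC (σ : Tuple d) : Prop :=
  ∃ ρ : Matrix (Idx d) (Idx d) ℂ, IsDensity ρ ∧ ∀ i, σ i = reduce d ({i}ᶜ) ρ

/-- The inner product `⟨⟨A,B⟩⟩ = Σ_i Tr(A_i B_i)` on `O` (a real number, since the
traces are real for Hermitian tuples). -/
def cwip (A B : Tuple d) : ℝ := (∑ i, ((A i) * (B i)).trace).re

/-- A compatibility witness: an element of `O` pairing nonnegatively with all of `C`. -/
def IsWitness (W : Tuple d) : Prop :=
  IsHermTuple d W ∧ ∀ ρ, MemC d ρ → 0 ≤ cwip d W ρ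

/-- `p(W) = Σ_i W_i ⊗ 1_i`. -/
def pW (W : Tuple d) : Matrix (Idx d) (Idx d) ℂ :=
  ∑ i, embed d ({i}ᶜ) (W i)

/-- `Δ(Z) = Σ_{A ⊊ N} (−1)^{|A|} (Tr_{N∖A} Z) ⊗ 1_{N∖A}`. -/
def Δop (Z : Matrix (Idx d) (Idx d) ℂ) : Matrix (Idx d) (Idx d) ℂ :=
  ∑ A ∈ Finset.univ.filter (fun A : Finset (Fin n) => A ≠ Finset.univ),
    ((-1 : ℂ) ^ A.card) • embed d A (reduce d A Z)

/-- The tensor product `T_1 ⊗ ⋯ ⊗ T_n` of one-system operators. -/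
def tensorAll (T : ∀ i, Matrix (Fin (d i)) (Fin (d i)) ℂ) :
    Matrix (Idx d) (Idx d) ℂ :=
  fun x y => ∏ i, T i (x i) (y i)

/-- Partial trace from the factors in `B` down to the factors in `B'` (for `B' ⊆ B`). -/
def reduceSub (B B' : Finset (Fin n)) (M : Matrix (SubIdx d B) (SubIdx d B) ℂ) :
    Matrix (SubIdx d B') (SubIdx d B') ℂ :=
  fun x y => ∑ z : SubIdx d (B \ B'),
    M (fun i => if h : i.1 ∈ B' then x ⟨i.1, h⟩ else z ⟨i.1, Finset.mem_sdiff.mpr ⟨i.2, h⟩⟩)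
      (fun i => if h : i.1 ∈ B' then y ⟨i.1, h⟩ else z ⟨i.1, Finset.mem_sdiff.mpr ⟨i.2, h⟩⟩)

/-- A tuple of subsystem states has consistent overlapping partial traces if
tracing the `j`-factor out of `σ_i` agrees with tracing the `i`-factor out of `σ_j`. -/
def HasConsistentTraces (σ : Tuple d) : Prop :=
  ∀ i j : Fin n, i ≠ j →
    reduceSub d ({i}ᶜ) ({i}ᶜ ∩ {j}ᶜ) (σ i) = reduceSub d ({j}ᶜ) ({i}ᶜ ∩ {j}ᶜ) (σ j)

/-- The tuple `I` of reduced states of the maximally mixed state `1_H / D`. -/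
def Itup : Tuple d :=
  fun i => ((d i : ℂ) / (∏ k, (d k : ℂ))) • (1 : Matrix (RedIdx d i) (RedIdx d i) ℂ)

/-- A positive tuple: all components positive semidefinite. -/
def PosTuple (σ : Tuple d) : Prop := ∀ i, (σ i).PosSemidef

/-- A normalized witness: `⟨⟨W, I⟩⟩ = 1` (equivalently `Tr p(W) = 1`). -/
def Normalized (W : Tuple d) : Prop := cwip d W (Itup d) = 1

/-- `W'` is finer than `W`. -/
def Finer (W' W : Tuple d) : Prop :=
  ∀ σ, PosTuple d σ → cwip d W σ < 0 → cwip d W' σ < 0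

/-- `λ(W, W') = inf_{σ ∈ D_W} |⟨⟨W',σ⟩⟩| / |⟨⟨W,σ⟩⟩|`. -/
def lam (W W' : Tuple d) : ℝ :=
  sInf {t | ∃ σ, PosTuple d σ ∧ cwip d W σ < 0 ∧ t = |cwip d W' σ| / |cwip d W σ|}

end
end Compat

open Matrix BigOperators
open scoped ComplexOrder

namespace CompatAux
open Compat
noncomputable section
variable {n : ℕ} (d : Fin n → ℕ)

/-- Transport an assignment along an equality of finsets. -/
def congrEquiv {s t : Finset (Fin n)} (h : s = t) : SubIdx d s ≃ SubIdx d t where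
  toFun z j := z ⟨j.1, h ▸ j.2⟩
  invFun z j := z ⟨j.1, h ▸ j.2⟩
  left_inv _ := rfl
  right_inv _ := rfl

/-- Split off coordinate `i` from an assignment on `s` with `i ∈ s`. -/
def splitEquiv {s : Finset (Fin n)} {i : Fin n} (hi : i ∈ s) :
    SubIdx d s ≃ Fin (d i) × SubIdx d (s.erase i) where
  toFun z := (z ⟨i, hi⟩, fun j => z ⟨j.1, Finset.mem_of_mem_erase j.2⟩)
  invFun p j :=
    if h : j.1 = i then Fin.cast (congrArg d h.symm) p.1
    else p.2 ⟨j.1, Finset.mem_erase.mpr ⟨h, j.2⟩⟩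
  left_inv z := by
    funext j
    by_cases h : j.1 = i
    · simp only [dif_pos h]
      rcases j with ⟨v, hv⟩
      subst h
      rfl
    · simp only [dif_neg h]
  right_inv p := by
    rcases p with ⟨a, w⟩
    ext j
    · simp
    · simp only
      rw [dif_neg (Finset.mem_erase.mp j.2).1]

lemma reduce_sum {ι : Type*} (s : Finset ι) (B : Finset (Fin n))
    (M : ι → Matrix (Idx d) (Idx d) ℂ) :
    reduce d B (∑ i ∈ s, M i) = ∑ i ∈ s, reduce d B (M i) := by
  funext x y
  simp only [reduce, Matrix.sum_apply]
  rw [Finset.sum_comm]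

lemma embed_sum {ι : Type*} (s : Finset ι) (B : Finset (Fin n))
    (M : ι → Matrix (SubIdx d B) (SubIdx d B) ℂ) :
    embed d B (∑ i ∈ s, M i) = ∑ i ∈ s, embed d B (M i) := by
  funext x y
  rw [Matrix.sum_apply]
  by_cases h : ∀ i ∈ Bᶜ, x i = y i
  · rw [embed, if_pos h, Matrix.sum_apply]
    exact Finset.sum_congr rfl fun i _ => (if_pos h).symm
  · rw [embed, if_neg h]
    exact (Finset.sum_eq_zero fun i _ => if_neg h).symm

lemma reduceSub_self (B : Finset (Fin n)) (M : Matrix (SubIdx d B) (SubIdx d B) ℂ) :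
    reduceSub d B B M = M := by
  haveI : IsEmpty ((B \ B : Finset (Fin n)) : Type) :=
    ⟨fun j => absurd j.2 (by simp)⟩
  haveI : Unique (SubIdx d (B \ B)) := Pi.uniqueOfIsEmpty _
  funext x y
  rw [reduceSub, Finset.univ_unique, Finset.sum_singleton]
  congr 1 <;> funext j <;> rw [dif_pos j.2]

set_option maxHeartbeats 1000000 in
lemma embed_reduce_embed (W : Tuple d) (i : Fin n) (A : Finset (Fin n)) :
    embed d Aᶜ (reduce d Aᶜ (embed d ({i}ᶜ) (W i))) =
      (if i ∈ A then ((d i : ℕ) : ℂ) else 1) •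
        embed d (insert i A)ᶜ (reduceSub d ({i}ᶜ) ((insert i A)ᶜ) (W i)) := by
  funext x y
  by_cases hiA : i ∈ A
  · -- here insert i A = A and a factor d i appears
    rw [if_pos hiA, Finset.insert_eq_self.mpr hiA, Matrix.smul_apply, smul_eq_mul]
    simp only [embed, reduce, reduceSub]
    by_cases hxy : ∀ j ∈ (Aᶜ)ᶜ, x j = y j
    · rw [if_pos hxy, if_pos hxy]
      have hiAc : i ∈ (Aᶜ)ᶜ := by simpa using hiA
      have hc : ∀ z : SubIdx d (Aᶜ)ᶜ, ∀ j ∈ (({i} : Finset (Fin n))ᶜ)ᶜ,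
          glue d Aᶜ (fun j => x j.1) z j = glue d Aᶜ (fun j => y j.1) z j := by
        intro z j hj
        have hj' : j = i := by simpa using hj
        subst hj'
        simp [glue, hiA]
      rw [Finset.sum_congr rfl (fun z _ => if_pos (hc z))]
      have hset : ((Aᶜ)ᶜ).erase i = {i}ᶜ \ Aᶜ := by
        ext j
        simp only [Finset.mem_erase, Finset.mem_compl, Finset.mem_sdiff,
          Finset.mem_singleton, not_not]
      set e := (splitEquiv d hiAc).symm with he
      rw [← Equiv.sum_comp e (fun z : SubIdx d (Aᶜ)ᶜ => (W i)
        (fun j => glue d Aᶜ (fun j => x j.1) z j.1)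
        (fun j => glue d Aᶜ (fun j => y j.1) z j.1)), Fintype.sum_prod_type]
      have harg : ∀ (a : Fin (d i)) (w : SubIdx d (((Aᶜ)ᶜ).erase i))
          (u : Idx d), (fun (j : ({i}ᶜ : Finset (Fin n))) =>
              glue d Aᶜ (fun j => u j.1) (e (a, w)) j.1)
            = fun (j : ({i}ᶜ : Finset (Fin n))) =>
              if h : j.1 ∈ Aᶜ then u j.1
              else (congrEquiv d hset w) ⟨j.1, by
                rw [← hset]; exact Finset.mem_erase.mpr
                  ⟨fun hh => absurd (Finset.mem_singleton.mpr hh)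
                    (Finset.mem_compl.mp j.2), Finset.mem_compl.mpr h⟩⟩ := by
        intro a w u
        funext j
        have hji : j.1 ≠ i := fun hh =>
          absurd (Finset.mem_singleton.mpr hh) (Finset.mem_compl.mp j.2)
        by_cases h : j.1 ∈ Aᶜ
        · simp [glue, h]
        · simp only [glue, dif_neg h, dif_pos h]
          rw [he]
          simp only [splitEquiv, Equiv.coe_fn_symm_mk, dif_neg hji]
          rfl
      rw [Finset.sum_congr rfl (fun a _ => Finset.sum_congr rfl (fun w _ => by
        rw [harg a w x, harg a w y]))]
      rw [Finset.sum_const, Finset.card_univ, Fintype.card_fin, nsmul_eq_mul]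
      congr 1
      exact Fintype.sum_equiv (congrEquiv d hset) _ _ (fun w => rfl)
    · rw [if_neg hxy, if_neg hxy, mul_zero]
  · rw [if_neg hiA, one_smul]
    simp only [embed, reduce, reduceSub]
    have hcond : (∀ j ∈ ((insert i A)ᶜ)ᶜ, x j = y j) ↔
        ((∀ j ∈ (Aᶜ)ᶜ, x j = y j) ∧ x i = y i) := by
      simp only [Finset.mem_compl, not_not, Finset.mem_insert]
      constructor
      · exact fun h => ⟨fun j hj => h j (Or.inr hj), h i (Or.inl rfl)⟩
      · rintro ⟨h1, h2⟩ j (rfl | hj)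
        · exact h2
        · exact h1 j hj
    have hinner : ∀ z : SubIdx d (Aᶜ)ᶜ,
        ((∀ j ∈ (({i} : Finset (Fin n))ᶜ)ᶜ, glue d Aᶜ (fun j => x j.1) z j
            = glue d Aᶜ (fun j => y j.1) z j) ↔ x i = y i) := by
      intro z
      have hic : i ∈ Aᶜ := Finset.mem_compl.mpr hiA
      constructor
      · intro h
        have := h i (by simp)
        simpa [glue, hic] using this
      · intro h j hj
        have hj' : j = i := by simpa using hj
        subst hj'
        simpa [glue, hic] using h
    by_cases h1 : ∀ j ∈ (Aᶜ)ᶜ, x j = y j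
    · by_cases h2 : x i = y i
      · rw [if_pos h1, if_pos (hcond.mpr ⟨h1, h2⟩)]
        rw [Finset.sum_congr rfl (fun z _ => if_pos ((hinner z).mpr h2))]
        have hset : (Aᶜ)ᶜ = {i}ᶜ \ (insert i A)ᶜ := by
          ext j
          simp only [Finset.mem_compl, not_not, Finset.mem_sdiff,
            Finset.mem_singleton, Finset.mem_insert]
          constructor
          · intro hj
            exact ⟨fun hji => hiA (hji ▸ hj), Or.inr hj⟩
          · rintro ⟨hji, (rfl | hj)⟩
            · exact absurd rfl hji
            · exact hj
        refine Fintype.sum_equiv (congrEquiv d hset) _ _ (fun z => ?_)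
        congr 1 <;> funext j <;> rcases j with ⟨v, hv⟩
        · have hvi : v ≠ i := by simpa using hv
          by_cases h : v ∈ Aᶜ
          · have h' : v ∈ (insert i A)ᶜ := by
              simp only [Finset.mem_compl, Finset.mem_insert] at h ⊢
              tauto
            simp [glue, h, h', hvi]
          · have h' : v ∉ (insert i A)ᶜ := by
              simp only [Finset.mem_compl, Finset.mem_insert] at h ⊢
              tauto
            simp only [glue, dif_neg h, dif_neg h']
            rfl
        · have hvi : v ≠ i := by simpa using hv
          by_cases h : v ∈ Aᶜ
          · have h' : v ∈ (insert i A)ᶜ := by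
              simp only [Finset.mem_compl, Finset.mem_insert] at h ⊢
              tauto
            simp [glue, h, h', hvi]
          · have h' : v ∉ (insert i A)ᶜ := by
              simp only [Finset.mem_compl, Finset.mem_insert] at h ⊢
              tauto
            simp only [glue, dif_neg h, dif_neg h']
            rfl
      · rw [if_pos h1, if_neg (fun hc => h2 (hcond.mp hc).2)]
        exact Finset.sum_eq_zero fun z _ => if_neg (fun hh => h2 ((hinner z).mp hh))
    · rw [if_neg h1, if_neg (fun hc => h1 (hcond.mp hc).1)]

lemma comb (hd : ∀ i, 1 ≤ d i) (i : Fin n) {M : Type*} [AddCommGroup M] [Module ℂ M]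
    (F : Finset (Fin n) → M) :
    ∑ A ∈ Finset.univ.filter (fun A : Finset (Fin n) => A ≠ ∅),
      ((((-1 : ℂ) ^ A.card) / (∏ j ∈ A, (d j : ℂ))) *
        (if i ∈ A then ((d i : ℕ) : ℂ) else 1)) • F (insert i A)
      = -(F {i}) := by
  have hdc : ∀ j, ((d j : ℕ) : ℂ) ≠ 0 := fun j =>
    Nat.cast_ne_zero.mpr (Nat.one_le_iff_ne_zero.mp (hd j))
  have hprod : ∀ A : Finset (Fin n), (∏ j ∈ A, (d j : ℂ)) ≠ 0 := fun A =>
    Finset.prod_ne_zero_iff.mpr fun j _ => hdc j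
  set g : Finset (Fin n) → M :=
    fun C => (((-1 : ℂ) ^ C.card) * (d i : ℂ) / ∏ j ∈ C, (d j : ℂ)) • F C with hg
  rw [← Finset.sum_filter_add_sum_filter_not _ (fun A => i ∈ A)]
  have e1 : ∑ A ∈ (Finset.univ.filter (fun A : Finset (Fin n) => A ≠ ∅)).filter
        (fun A => i ∈ A),
      ((((-1 : ℂ) ^ A.card) / (∏ j ∈ A, (d j : ℂ))) *
        (if i ∈ A then ((d i : ℕ) : ℂ) else 1)) • F (insert i A)
      = ∑ C ∈ Finset.univ.filter (fun C : Finset (Fin n) => i ∈ C), g C := by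
    apply Finset.sum_congr
    · ext A
      simp only [Finset.filter_filter, Finset.mem_filter, Finset.mem_univ, true_and]
      exact ⟨fun h => h.2, fun h => ⟨Finset.ne_empty_of_mem h, h⟩⟩
    · intro A hA
      rw [Finset.mem_filter] at hA
      rw [if_pos hA.2, Finset.insert_eq_self.mpr hA.2, hg, div_mul_eq_mul_div]
  have e2 : ∑ A ∈ (Finset.univ.filter (fun A : Finset (Fin n) => A ≠ ∅)).filter
        (fun A => ¬ i ∈ A),
      ((((-1 : ℂ) ^ A.card) / (∏ j ∈ A, (d j : ℂ))) *
        (if i ∈ A then ((d i : ℕ) : ℂ) else 1)) • F (insert i A)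
      = ∑ C ∈ (Finset.univ.filter (fun C : Finset (Fin n) => i ∈ C)).erase {i},
          -(g C) := by
    refine Finset.sum_nbij' (fun A => insert i A) (fun C => C.erase i) ?_ ?_ ?_ ?_ ?_
    · intro A hA
      simp only [Finset.mem_filter, Finset.mem_univ, true_and] at hA
      refine Finset.mem_erase.mpr ⟨?_, by simp⟩
      intro h
      obtain ⟨a, ha⟩ := Finset.nonempty_of_ne_empty hA.1
      have h' : insert i A = {i} := h
      have ha' : a ∈ insert i A := Finset.mem_insert_of_mem ha
      rw [h', Finset.mem_singleton] at ha'
      exact hA.2 (ha' ▸ ha)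
    · intro C hC
      rw [Finset.mem_erase, Finset.mem_filter] at hC
      simp only [Finset.mem_filter, Finset.mem_univ, true_and]
      refine ⟨?_, Finset.notMem_erase i C⟩
      intro h
      apply hC.1
      rw [← Finset.insert_erase hC.2.2, h]
      simp
    · intro A hA
      simp only [Finset.mem_filter, Finset.mem_univ, true_and] at hA
      exact Finset.erase_insert hA.2
    · intro C hC
      rw [Finset.mem_erase, Finset.mem_filter] at hC
      exact Finset.insert_erase hC.2.2
    · intro A hA
      simp only [Finset.mem_filter, Finset.mem_univ, true_and] at hA
      rw [if_neg hA.2, mul_one, hg]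
      simp only
      rw [Finset.card_insert_of_notMem hA.2, Finset.prod_insert hA.2, ← neg_smul]
      congr 1
      rw [pow_succ, ← neg_div, div_eq_div_iff (hprod A) (mul_ne_zero (hdc i) (hprod A))]
      ring
  rw [e1, e2, Finset.sum_neg_distrib,
    ← Finset.sum_erase_add _ g (show ({i} : Finset (Fin n)) ∈
        Finset.univ.filter (fun C : Finset (Fin n) => i ∈ C) by simp)]
  have hsingle : g {i} = -(F {i}) := by
    rw [hg]
    simp only
    rw [Finset.card_singleton, Finset.prod_singleton, pow_one, mul_div_assoc,
      div_self (hdc i), mul_one, neg_one_smul]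
  rw [hsingle]
  abel

end
end CompatAux

/-- if `Z = p(W)` for some `W ∈ O`, then
`Z = − Σ_{∅ ≠ A ⊆ N} ((−1)^{|A|}/d_A) (Tr_A Z) ⊗ 1_A`. -/
theorem pW_inclusion_exclusion {n : ℕ} (d : Fin n → ℕ) (hn : 2 ≤ n) (hd : ∀ i, 1 ≤ d i)
    (W : Compat.Tuple d) (hherm : Compat.IsHermTuple d W)
    (Z : Matrix (Compat.Idx d) (Compat.Idx d) ℂ) (hZ : Z = Compat.pW d W) :
    Z = - ∑ A ∈ Finset.univ.filter (fun A : Finset (Fin n) => A ≠ ∅),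
        (((-1 : ℂ) ^ A.card) / (∏ i ∈ A, (d i : ℂ))) •
          Compat.embed d Aᶜ (Compat.reduce d Aᶜ Z) := by
  subst hZ
  have step : ∀ A : Finset (Fin n),
      (((-1 : ℂ) ^ A.card) / (∏ i ∈ A, (d i : ℂ))) •
          Compat.embed d Aᶜ (Compat.reduce d Aᶜ (Compat.pW d W))
        = ∑ i, ((((-1 : ℂ) ^ A.card) / (∏ j ∈ A, (d j : ℂ))) *
            (if i ∈ A then ((d i : ℕ) : ℂ) else 1)) •
            Compat.embed d (insert i A)ᶜ
              (Compat.reduceSub d ({i}ᶜ) ((insert i A)ᶜ) (W i)) := by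
    intro A
    rw [Compat.pW, CompatAux.reduce_sum, CompatAux.embed_sum, Finset.smul_sum]
    exact Finset.sum_congr rfl fun i _ => by
      rw [CompatAux.embed_reduce_embed, smul_smul]
  have main : ∑ A ∈ Finset.univ.filter (fun A : Finset (Fin n) => A ≠ ∅),
      (((-1 : ℂ) ^ A.card) / (∏ i ∈ A, (d i : ℂ))) •
        Compat.embed d Aᶜ (Compat.reduce d Aᶜ (Compat.pW d W))
      = -(Compat.pW d W) := by
    rw [Finset.sum_congr rfl fun A _ => step A, Finset.sum_comm]
    rw [Finset.sum_congr rfl fun (i : Fin n) (_ : i ∈ (Finset.univ : Finset (Fin n))) =>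
      CompatAux.comb d hd i
        (fun C => Compat.embed d Cᶜ (Compat.reduceSub d ({i}ᶜ) Cᶜ (W i)))]
    rw [Finset.sum_neg_distrib, Compat.pW]
    exact neg_inj.mpr (Finset.sum_congr rfl fun i _ => by
      rw [CompatAux.reduceSub_self])
  rw [main, neg_neg]
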